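/- (Finitized Rogers–Ramanujan identities) For a ∈ {0,1} and every integer L ≥ a, the following polynomial identity holds: Σ_{m=0}^{∞} q^{m(m+a)} [ L−m−a ; m ] = Σ_{j=−∞}^{∞} (−1)^j q^{j(5j+1+2a)/2} [ L ; ⌊(L − 5j − a)/2⌋ ], where both sums have only finitely many nonzero terms. -/

import Mathlib

/-! Both sides, as functions of `L`, satisfy `S(L) = S(L - 1) + q ^ (L - 1) * S(L - 2)` and take
the value `1` at `L = a` and `L = a + 1`. For the left side this is the `q`-Pascal rule applied
termwise. On the right, the `j`-th term is expanded by the two `q`-Pascal rules, used in the order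
dictated by the parity of `L - 5j - a`; besides the two terms of the recurrence this leaves
a remainder `r j - r (j + 1)`, which telescopes away. The remainders match up because the
exponent `j(5j + 1 + 2a)/2` grows by `5j + 3 + a` from `j` to `j + 1`. -/

attribute [local instance] Classical.propDecidable

noncomputable section

variable {K : Type*} [Field K]

/-- `(q)_n = ∏_{k=1}^n (1 - q^k)`. -/
def qPoch (q : K) (n : ℕ) : K :=
  ∏ k ∈ Finset.range n, (1 - q ^ (k + 1))

/-- the Gaussian polynomial `[N; m]`. -/
def gauss (q : K) (N m : ℤ) : K :=
  if 0 ≤ m ∧ m ≤ N then qPoch q N.toNat / (qPoch q m.toNat * qPoch q (N - m).toNat) else 0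

section Gauss

variable {q : K}

lemma qPoch_succ (q : K) (n : ℕ) : qPoch q (n + 1) = qPoch q n * (1 - q ^ (n + 1)) :=
  Finset.prod_range_succ _ _

lemma one_sub_pow_succ_ne_zero (hq : ¬IsOfFinOrder q) (n : ℕ) : 1 - q ^ (n + 1) ≠ 0 :=
  sub_ne_zero.2 fun h => hq <| isOfFinOrder_iff_pow_eq_one.2 ⟨n + 1, n.succ_pos, h.symm⟩

lemma qPoch_zero (q : K) : qPoch q 0 = 1 :=
  Finset.prod_range_zero _

lemma qPoch_ne_zero (hq : ¬IsOfFinOrder q) (n : ℕ) : qPoch q n ≠ 0 :=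
  Finset.prod_ne_zero_iff.2 fun k _ => one_sub_pow_succ_ne_zero hq k

lemma gauss_eq_zero {N k : ℤ} (h : k < 0 ∨ N < k) : gauss q N k = 0 :=
  if_neg (by omega)

lemma nonneg_and_le_of_gauss_ne_zero {N k : ℤ} (h : gauss q N k ≠ 0) : 0 ≤ k ∧ k ≤ N := by
  by_contra hk
  exact h (gauss_eq_zero (by omega))

lemma gauss_eq_div {N k : ℤ} (m u : ℕ) (hk : k = m) (hN : N = m + u) :
    gauss q N k = qPoch q (m + u) / (qPoch q m * qPoch q u) := by
  subst hk hN
  rw [gauss, if_pos (by omega), add_sub_cancel_left]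
  norm_cast

lemma gauss_symm (N k : ℤ) : gauss q N (N - k) = gauss q N k := by
  unfold gauss
  by_cases h : 0 ≤ k ∧ k ≤ N
  · rw [if_pos (by omega), if_pos h, sub_sub_cancel, mul_comm]
  · rw [if_neg (by omega), if_neg h]

lemma gauss_zero_right (hq : ¬IsOfFinOrder q) {N : ℤ} (hN : 0 ≤ N) : gauss q N 0 = 1 := by
  lift N to ℕ using hN
  rw [gauss_eq_div 0 N (by simp) (by simp), zero_add, qPoch_zero, one_mul,
    div_self (qPoch_ne_zero hq N)]

lemma gauss_self (hq : ¬IsOfFinOrder q) {N : ℤ} (hN : 0 ≤ N) : gauss q N N = 1 := by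
  have h := gauss_symm (q := q) N 0
  rw [sub_zero] at h
  rw [h, gauss_zero_right hq hN]

lemma gauss_pascal (hq : ¬IsOfFinOrder q) {L : ℤ} (hL : 1 ≤ L) (k : ℤ) :
    gauss q L k = gauss q (L - 1) k + q ^ (L - k) * gauss q (L - 1) (k - 1) := by
  obtain hk | rfl | hk | rfl | hk : k < 0 ∨ k = 0 ∨ 0 < k ∧ k < L ∨ k = L ∨ L < k := by omega
  · simp only [gauss_eq_zero (.inl hk), gauss_eq_zero (.inl (by omega : k - 1 < 0)), mul_zero,
      add_zero]
  · rw [gauss_zero_right hq (by omega), gauss_zero_right hq (by omega),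
      gauss_eq_zero (.inl (by omega)), mul_zero, add_zero]
  · obtain ⟨m, u, rfl, rfl⟩ : ∃ m u : ℕ, k = m + 1 ∧ L = m + u + 2 :=
      ⟨(k - 1).toNat, (L - k - 1).toNat, by omega, by omega⟩
    rw [gauss_eq_div (m + 1) (u + 1) (by push_cast; ring) (by push_cast; ring),
      gauss_eq_div (m + 1) u (by push_cast; ring) (by push_cast; ring),
      gauss_eq_div m (u + 1) (by ring) (by push_cast; ring),
      show (m : ℤ) + u + 2 - (m + 1) = (u + 1 : ℕ) by push_cast; ring, zpow_natCast,
      show m + 1 + (u + 1) = m + u + 1 + 1 by ring, show m + (u + 1) = m + u + 1 by ring,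
      show m + 1 + u = m + u + 1 by ring, qPoch_succ q (m + u + 1), qPoch_succ q m,
      qPoch_succ q u]
    have := qPoch_ne_zero hq m
    have := qPoch_ne_zero hq u
    have := one_sub_pow_succ_ne_zero hq m
    have := one_sub_pow_succ_ne_zero hq u
    field_simp
    ring
  · rw [gauss_self hq (by omega), gauss_eq_zero (.inr (by omega)), sub_self, zpow_zero, one_mul,
      gauss_self hq (by omega), zero_add]
  · simp only [gauss_eq_zero (.inr hk), gauss_eq_zero (.inr (by omega : L - 1 < k)),
      gauss_eq_zero (.inr (by omega : L - 1 < k - 1)), mul_zero, add_zero]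

lemma gauss_pascal' (hq : ¬IsOfFinOrder q) {L : ℤ} (hL : 1 ≤ L) (k : ℤ) :
    gauss q L k = gauss q (L - 1) (k - 1) + q ^ k * gauss q (L - 1) k := by
  rw [← gauss_symm, gauss_pascal hq hL, sub_sub_cancel, ← gauss_symm (L - 1) (k - 1),
    ← gauss_symm (L - 1) k]
  ring_nf

end Gauss

lemma finsum_eq_zero_add {M : Type*} [AddCommMonoid M] {f : ℕ → M} (hf : f.HasFiniteSupport) :
    ∑ᶠ n, f n = f 0 + ∑ᶠ n, f (n + 1) := by
  rw [← finsum_mem_univ, ← Nat.zero_union_range_succ, ← Set.insert_eq,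
    finsum_mem_insert' _ (by simp) (hf.subset Set.inter_subset_right),
    finsum_mem_range Nat.succ_injective]

section Fermionic

variable {q : K}

-- `fermionicSum` and `bosonicSum` are the left and right sides, in the usual physics terminology.
def fermionicTerm (q : K) (a : ℕ) (L : ℤ) (m : ℕ) : K :=
  q ^ (m * (m + a)) * gauss q (L - m - a) m

def fermionicSum (q : K) (a : ℕ) (L : ℤ) : K :=
  ∑ᶠ m, fermionicTerm q a L m

lemma hasFiniteSupport_fermionicTerm (q : K) (a : ℕ) (L : ℤ) :
    (fermionicTerm q a L).HasFiniteSupport := by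
  refine (Set.finite_Iic L.toNat).subset fun m hm => ?_
  have := nonneg_and_le_of_gauss_ne_zero (right_ne_zero_of_mul hm)
  simp only [Set.mem_Iic]
  omega

lemma fermionicTerm_zero (hq : ¬IsOfFinOrder q) {a : ℕ} {L : ℤ} (hL : a ≤ L) :
    fermionicTerm q a L 0 = 1 := by
  rw [fermionicTerm, Nat.cast_zero, gauss_zero_right hq (by omega), zero_mul, pow_zero, one_mul]

lemma fermionicTerm_succ (hq₀ : q ≠ 0) (hq : ¬IsOfFinOrder q) (a : ℕ) (L : ℤ) (m : ℕ) :
    fermionicTerm q a L (m + 1) =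
      fermionicTerm q a (L - 1) (m + 1) + q ^ (L - 1) * fermionicTerm q a (L - 2) m := by
  unfold fermionicTerm
  by_cases hL : L - (m + 1 : ℕ) - a < 1
  · simp only [gauss_eq_zero (.inr (by omega : L - (m + 1 : ℕ) - a < (m + 1 : ℕ))),
      gauss_eq_zero (.inr (by omega : L - 1 - (m + 1 : ℕ) - a < (m + 1 : ℕ))),
      gauss_eq_zero (.inr (by omega : L - 2 - m - a < m)), mul_zero, add_zero]
  have hpow : q ^ ((m + 1) * (m + 1 + a)) * q ^ (L - (m + 1 : ℕ) - a - (m + 1 : ℕ)) =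
      q ^ (L - 1) * q ^ (m * (m + a)) := by
    rw [← zpow_natCast, ← zpow_natCast q (m * (m + a)), ← zpow_add₀ hq₀, ← zpow_add₀ hq₀]
    push_cast
    ring_nf
  rw [show L - 1 - ((m + 1 : ℕ) : ℤ) - a = L - (m + 1 : ℕ) - a - 1 by ring,
    show L - 2 - m - a = L - (m + 1 : ℕ) - a - 1 by push_cast; ring,
    show (m : ℤ) = (m + 1 : ℕ) - 1 by push_cast; ring, gauss_pascal hq (by omega)]
  linear_combination gauss q (L - (m + 1 : ℕ) - a - 1) ((m + 1 : ℕ) - 1) * hpow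

lemma fermionicSum_recurrence (hq₀ : q ≠ 0) (hq : ¬IsOfFinOrder q) {a : ℕ} {L : ℤ}
    (hL : a + 1 ≤ L) :
    fermionicSum q a L = fermionicSum q a (L - 1) + q ^ (L - 1) * fermionicSum q a (L - 2) := by
  have hL₁ := hasFiniteSupport_fermionicTerm q a (L - 1)
  have hL₂ := hasFiniteSupport_fermionicTerm q a (L - 2)
  have hshift : (fun m => fermionicTerm q a (L - 1) (m + 1)).HasFiniteSupport :=
    hL₁.comp_of_injective (add_left_injective 1)
  have hmul : (fun m => q ^ (L - 1) * fermionicTerm q a (L - 2) m).HasFiniteSupport := by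
    fun_prop
  unfold fermionicSum
  rw [finsum_eq_zero_add (hasFiniteSupport_fermionicTerm q a L), finsum_eq_zero_add hL₁,
    finsum_congr (fermionicTerm_succ hq₀ hq a L), finsum_add_distrib hshift hmul, mul_finsum,
    fermionicTerm_zero hq (by omega), fermionicTerm_zero hq (by omega), add_assoc]

lemma fermionicSum_eq_one (hq : ¬IsOfFinOrder q) {a : ℕ} {L : ℤ} (hL : a ≤ L)
    (hL' : L ≤ a + 1) : fermionicSum q a L = 1 := by
  rw [fermionicSum, finsum_eq_single _ 0 fun m hm => ?_, fermionicTerm_zero hq hL]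
  rw [fermionicTerm, gauss_eq_zero (.inr (by omega)), mul_zero]

end Fermionic

lemma finsum_sub_add_one {M : Type*} [AddCommGroup M] {f : ℤ → M} (hf : f.HasFiniteSupport) :
    ∑ᶠ j, (f j - f (j + 1)) = 0 := by
  have hshift : (fun j => f (j + 1)).HasFiniteSupport :=
    hf.comp_of_injective (add_left_injective 1)
  rw [finsum_sub_distrib hf hshift, sub_eq_zero]
  exact (finsum_comp_equiv (Equiv.addRight 1)).symm

section Bosonic

variable {q : K}

def bosonicCoeff (q : K) (a j : ℤ) : K :=
  (-1) ^ j * q ^ (j * (5 * j + 1 + 2 * a) / 2)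

def bosonicTerm (q : K) (a L j : ℤ) : K :=
  bosonicCoeff q a j * gauss q L ((L - 5 * j - a) / 2)

def bosonicSum (q : K) (a L : ℤ) : K :=
  ∑ᶠ j, bosonicTerm q a L j

def bosonicRemainder (q : K) (a L j : ℤ) : K :=
  if Even (L - 5 * j - a) then
    bosonicCoeff q a j * q ^ ((L - 5 * j - a) / 2) * gauss q (L - 2) ((L - 5 * j - a) / 2)
  else 0

lemma finite_setOf_gauss_ne_zero (q : K) (a L N : ℤ) :
    {j | gauss q N ((L - 5 * j - a) / 2) ≠ 0}.Finite := by
  refine (Set.finite_Icc ((L - a - 2 * N - 1) / 5) ((L - a) / 5)).subset fun j hj => ?_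
  have := nonneg_and_le_of_gauss_ne_zero hj
  simp only [Set.mem_Icc]
  omega

lemma hasFiniteSupport_bosonicTerm (q : K) (a L : ℤ) : (bosonicTerm q a L).HasFiniteSupport :=
  (finite_setOf_gauss_ne_zero q a L L).subset fun _ hj => right_ne_zero_of_mul hj

lemma hasFiniteSupport_bosonicRemainder (q : K) (a L : ℤ) :
    (bosonicRemainder q a L).HasFiniteSupport := by
  refine (finite_setOf_gauss_ne_zero q a L (L - 2)).subset
    fun j (hj : bosonicRemainder q a L j ≠ 0) => ?_
  unfold bosonicRemainder at hj
  split_ifs at hj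
  · exact right_ne_zero_of_mul hj
  · exact absurd rfl hj

lemma bosonicCoeff_add_one (hq₀ : q ≠ 0) (a j : ℤ) :
    bosonicCoeff q a (j + 1) = -(q ^ (5 * j + 3 + a) * bosonicCoeff q a j) := by
  have hexp : (j + 1) * (5 * (j + 1) + 1 + 2 * a) / 2 =
      j * (5 * j + 1 + 2 * a) / 2 + (5 * j + 3 + a) := by
    rw [← Int.add_mul_ediv_right _ _ two_ne_zero]
    ring_nf
  rw [bosonicCoeff, bosonicCoeff, hexp, zpow_add₀ hq₀, zpow_add_one₀ (by norm_num)]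
  ring

lemma bosonicTerm_recurrence (hq₀ : q ≠ 0) (hq : ¬IsOfFinOrder q) (a : ℤ) {L : ℤ} (hL : 2 ≤ L)
    (j : ℤ) :
    bosonicTerm q a L j = bosonicTerm q a (L - 1) j + q ^ (L - 1) * bosonicTerm q a (L - 2) j +
      (bosonicRemainder q a L j - bosonicRemainder q a L (j + 1)) := by
  unfold bosonicTerm bosonicRemainder
  obtain ⟨k, hk | hk⟩ := Int.even_or_odd' (L - 5 * j - a)
  · rw [if_pos ⟨k, by omega⟩, if_neg (by rw [Int.not_even_iff_odd]; exact ⟨k - 3, by omega⟩),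
      show (L - 5 * j - a) / 2 = k by omega, show (L - 1 - 5 * j - a) / 2 = k - 1 by omega,
      show (L - 2 - 5 * j - a) / 2 = k - 1 by omega, gauss_pascal' hq (by omega) k,
      gauss_pascal hq (L := L - 1) (by omega) k, show L - 1 - 1 = L - 2 by ring]
    have hpow : q ^ k * q ^ (L - 1 - k) = q ^ (L - 1) := by
      rw [← zpow_add₀ hq₀, add_sub_cancel]
    linear_combination bosonicCoeff q a j * gauss q (L - 2) (k - 1) * hpow
  · rw [if_neg (by rw [Int.not_even_iff_odd]; exact ⟨k, hk⟩), if_pos ⟨k - 2, by omega⟩,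
      show (L - 5 * j - a) / 2 = k by omega, show (L - 1 - 5 * j - a) / 2 = k by omega,
      show (L - 2 - 5 * j - a) / 2 = k - 1 by omega,
      show (L - 5 * (j + 1) - a) / 2 = k - 2 by omega, gauss_pascal hq (by omega) k,
      gauss_pascal' hq (L := L - 1) (by omega) (k - 1), show L - 1 - 1 = L - 2 by ring,
      show k - 1 - 1 = k - 2 by ring, bosonicCoeff_add_one hq₀]
    have hpow₁ : q ^ (L - k) * q ^ (k - 1) = q ^ (L - 1) := by
      rw [← zpow_add₀ hq₀]; ring_nf
    have hpow₂ : q ^ (5 * j + 3 + a) * q ^ (k - 2) = q ^ (L - k) := by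
      rw [← zpow_add₀ hq₀]; congr 1; omega
    linear_combination bosonicCoeff q a j * gauss q (L - 2) (k - 1) * hpow₁ -
      bosonicCoeff q a j * gauss q (L - 2) (k - 2) * hpow₂

lemma bosonicSum_recurrence (hq₀ : q ≠ 0) (hq : ¬IsOfFinOrder q) (a : ℤ) {L : ℤ} (hL : 2 ≤ L) :
    bosonicSum q a L = bosonicSum q a (L - 1) + q ^ (L - 1) * bosonicSum q a (L - 2) := by
  have h₁ := hasFiniteSupport_bosonicTerm q a (L - 1)
  have h₂ := hasFiniteSupport_bosonicTerm q a (L - 2)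
  have hr := hasFiniteSupport_bosonicRemainder q a L
  have hr' : (fun j => bosonicRemainder q a L (j + 1)).HasFiniteSupport :=
    hr.comp_of_injective (add_left_injective 1)
  unfold bosonicSum
  rw [finsum_congr (bosonicTerm_recurrence hq₀ hq a hL),
    finsum_add_distrib (by fun_prop) (by fun_prop), finsum_add_distrib h₁ (by fun_prop),
    finsum_sub_add_one hr, add_zero, mul_finsum]

lemma bosonicSum_eq_one (hq : ¬IsOfFinOrder q) {a L : ℤ} (ha₀ : 0 ≤ a) (ha₁ : a ≤ 1)
    (hL : a ≤ L) (hL' : L ≤ a + 1) : bosonicSum q a L = 1 := by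
  rw [bosonicSum, finsum_eq_single _ 0 fun j hj => ?_]
  · rw [bosonicTerm, bosonicCoeff, show (L - 5 * 0 - a) / 2 = 0 by omega,
      gauss_zero_right hq (by omega)]
    simp
  · rw [bosonicTerm, gauss_eq_zero (by omega), mul_zero]

end Bosonic

theorem eq_of_second_order_recurrence {α : Type*} {f g : ℤ → α} (step : ℤ → α → α → α)
    {a : ℤ}
    (hf : ∀ L, a + 2 ≤ L → f L = step L (f (L - 1)) (f (L - 2)))
    (hg : ∀ L, a + 2 ≤ L → g L = step L (g (L - 1)) (g (L - 2)))
    (h₀ : f a = g a) (h₁ : f (a + 1) = g (a + 1)) {L : ℤ} (hL : a ≤ L) : f L = g L := by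
  suffices h : ∀ n : ℕ, f (a + n) = g (a + n) ∧ f (a + n + 1) = g (a + n + 1) by
    obtain ⟨n, rfl⟩ := Int.exists_add_of_le hL
    exact (h n).1
  intro n
  induction n with
  | zero => simpa using ⟨h₀, h₁⟩
  | succ n ih =>
    refine ⟨by simpa [add_assoc] using ih.2, ?_⟩
    have hn : a + (n + 1 : ℕ) + 1 = a + n + 2 := by push_cast; ring
    rw [hn, hf _ (by omega), hg _ (by omega), show a + n + 2 - 1 = a + n + 1 by ring,
      show a + n + 2 - 2 = a + n by ring, ih.1, ih.2]

lemma fermionicSum_eq_bosonicSum {q : K} (hq₀ : q ≠ 0) (hq : ¬IsOfFinOrder q) {a : ℕ}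
    (ha : a ≤ 1) {L : ℤ} (hL : a ≤ L) : fermionicSum q a L = bosonicSum q a L := by
  refine eq_of_second_order_recurrence (f := fermionicSum q a) (g := bosonicSum q a)
    (fun L x y => x + q ^ (L - 1) * y) (fun _ hL => fermionicSum_recurrence hq₀ hq (by omega))
    (fun _ hL => bosonicSum_recurrence hq₀ hq a (by omega)) ?_ ?_ hL
  · rw [fermionicSum_eq_one hq le_rfl (by omega),
      bosonicSum_eq_one hq (by omega) (by omega) le_rfl (by omega)]
  · rw [fermionicSum_eq_one hq (by omega) le_rfl,
      bosonicSum_eq_one hq (by omega) (by omega) (by omega) le_rfl]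

lemma RatFunc.not_isOfFinOrder_X {k : Type*} [Field k] : ¬IsOfFinOrder (RatFunc.X : RatFunc k) :=
  not_isOfFinOrder_of_injective_pow fun m n h => by
    simpa [← RatFunc.algebraMap_X, ← map_pow, RatFunc.intDegree_polynomial] using
      congrArg RatFunc.intDegree h

/-- **The finitized Rogers–Ramanujan identities** (Schur): for `a ∈ {0,1}` and `L ≥ a`,
`Σ_m q^{m(m+a)} [L-m-a; m] = Σ_j (-1)^j q^{j(5j+1+2a)/2} [L; ⌊(L-5j-a)/2⌋]`. -/
theorem finitized_rogers_ramanujan (a L : ℕ) (ha : a = 0 ∨ a = 1) (hL : a ≤ L) :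
    ∑ᶠ m : ℕ, (RatFunc.X : RatFunc ℚ) ^ (m * (m + a))
        * gauss RatFunc.X ((L : ℤ) - m - a) (m : ℤ)
      = ∑ᶠ j : ℤ, (-1 : RatFunc ℚ) ^ j
          * (RatFunc.X : RatFunc ℚ) ^ (Int.ediv (j * (5 * j + 1 + 2 * (a : ℤ))) 2)
          * gauss RatFunc.X (L : ℤ) (Int.ediv ((L : ℤ) - 5 * j - a) 2) :=
  fermionicSum_eq_bosonicSum RatFunc.X_ne_zero RatFunc.not_isOfFinOrder_X (by omega)
    (by exact_mod_cast hL)
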